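/- For a simple, properly ordered Bratteli-Vershik system (X,T), the following statements are equivalent: (1) (X,T) is weakly well timed; (2) some telescoping of (X,T) is well timed; (3) (X,T) is conjugate to a well timed system. -/

import Mathlib

set_option autoImplicit false

/-- An ordered Bratteli diagram: finite nonempty vertex sets `V n`, a single root
vertex at level `0`, finite edge sets `E n` (edges from level `n` to level `n+1`,
multiple edges allowed), every vertex has an outgoing edge, every non-root vertex
an incoming edge, and the edges into each vertex carry a linear order, encoded by
the relation `elt` which relates only edges with the same target. -/
structure BDiagram where
  V : ℕ → Type
  E : ℕ → Type
  fintV : ∀ n, Fintype (V n)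
  fintE : ∀ n, Fintype (E n)
  nonV : ∀ n, Nonempty (V n)
  rootSubsingleton : Subsingleton (V 0)
  src : ∀ {n}, E n → V n
  tgt : ∀ {n}, E n → V (n + 1)
  hasOut : ∀ (n : ℕ) (v : V n), ∃ e : E n, src e = v
  hasIn : ∀ (n : ℕ) (v : V (n + 1)), ∃ e : E n, tgt e = v
  elt : ∀ {n}, E n → E n → Prop
  elt_tgt : ∀ (n : ℕ) (e f : E n), elt e f → tgt e = tgt f
  elt_irrefl : ∀ (n : ℕ) (e : E n), ¬ elt e e
  elt_trans : ∀ (n : ℕ) (e f g : E n), elt e f → elt f g → elt e g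
  elt_total : ∀ (n : ℕ) (e f : E n), tgt e = tgt f → e ≠ f → elt e f ∨ elt f e

namespace BDiagram

variable (B : BDiagram)

def castV {m n : ℕ} (h : m = n) (v : B.V m) : B.V n := h ▸ v

/-- An edge is minimal if no edge (into the same target) is below it. -/
def IsMinEdge {n : ℕ} (e : B.E n) : Prop := ∀ e' : B.E n, ¬ B.elt e' e

/-- An edge is maximal if no edge (into the same target) is above it. -/
def IsMaxEdge {n : ℕ} (e : B.E n) : Prop := ∀ e' : B.E n, ¬ B.elt e e'

/-- The space of infinite paths from the root. -/
def PathSpace : Type := { x : ∀ n, B.E n // ∀ n, B.tgt (x n) = B.src (x (n + 1)) }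

def IsMinPath (x : B.PathSpace) : Prop := ∀ n, B.IsMinEdge (x.1 n)

def IsMaxPath (x : B.PathSpace) : Prop := ∀ n, B.IsMaxEdge (x.1 n)

/-- Properly ordered: unique minimal and unique maximal path. -/
def ProperlyOrdered : Prop :=
  (∃! x : B.PathSpace, B.IsMinPath x) ∧ (∃! x : B.PathSpace, B.IsMaxPath x)

/-- The partial order on cofinal paths: `x < y` iff they eventually agree and at the
last disagreement the edge of `x` is below the edge of `y`. -/
def pathLT (x y : B.PathSpace) : Prop :=
  ∃ N : ℕ, B.elt (x.1 N) (y.1 N) ∧ ∀ n : ℕ, N < n → x.1 n = y.1 n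

/-- `T` is the Vershik map: each non-maximal path goes to its successor, and each
maximal path goes to a minimal path. -/
def IsVershik (T : B.PathSpace ≃ B.PathSpace) : Prop :=
  (∀ x : B.PathSpace, ¬ B.IsMaxPath x →
    B.pathLT x (T x) ∧ ∀ z : B.PathSpace, B.pathLT x z → ¬ B.pathLT z (T x)) ∧
  (∀ x : B.PathSpace, B.IsMaxPath x → B.IsMinPath (T x))

/-- `f` is a chain of consecutive edges on levels `[a, b)`. -/
def SegOn (f : ∀ i, B.E i) (a b : ℕ) : Prop :=
  ∀ i : ℕ, a ≤ i → i + 1 < b → B.tgt (f i) = B.src (f (i + 1))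

/-- Simplicity: some telescoping has complete connections between adjacent levels. -/
def Simple : Prop :=
  ∃ ns : ℕ → ℕ, StrictMono ns ∧ ns 0 = 0 ∧
    ∀ (l c : ℕ), ns (l + 1) = c + 1 →
      ∀ (v : B.V (ns l)) (w : B.V (c + 1)),
        ∃ f : ∀ i, B.E i, B.SegOn f (ns l) (c + 1) ∧ B.src (f (ns l)) = v ∧ B.tgt (f c) = w

/-- The natural (Cantor) topology on the path space, induced from the product of
the discrete topologies on the edge sets. -/
def pathTop : TopologicalSpace B.PathSpace :=
  TopologicalSpace.induced Subtype.val (@Pi.topologicalSpace ℕ B.E (fun _ => ⊥))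

/-- Integer iterates of a bijection of the path space. -/
def iterZ (T : B.PathSpace ≃ B.PathSpace) (m : ℤ) : B.PathSpace ≃ B.PathSpace :=
  (T : Equiv.Perm B.PathSpace) ^ m

/-- Two paths have the same `k`-coding: for every time `m` the initial segments of
`T^m x` and `T^m y` from the root to level `k` coincide. -/
def SameCoding (T : B.PathSpace ≃ B.PathSpace) (k : ℕ) (x y : B.PathSpace) : Prop :=
  ∀ (m : ℤ) (i : ℕ), i < k → ((B.iterZ T m) x).1 i = ((B.iterZ T m) y).1 i

/-- A depth `k` pair: distinct paths with the same `k`-coding but not the same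
`(k+1)`-coding. -/
def DepthPair (T : B.PathSpace ≃ B.PathSpace) (k : ℕ) (x y : B.PathSpace) : Prop :=
  x ≠ y ∧ B.SameCoding T k x y ∧ ¬ B.SameCoding T (k + 1) x y

/-- The pair `x, y` has a `j` cut: for some time `m`, both `T^m x` and `T^m y` are
minimal from the root into level `j`. -/
def HasCut (T : B.PathSpace ≃ B.PathSpace) (j : ℕ) (x y : B.PathSpace) : Prop :=
  ∃ m : ℤ, (∀ i : ℕ, i < j → B.IsMinEdge (((B.iterZ T m) x).1 i)) ∧
    (∀ i : ℕ, i < j → B.IsMinEdge (((B.iterZ T m) y).1 i))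

/-- Nonexpansive: for every `k ≥ 1` there are two distinct paths with the same
`k`-coding. -/
def Nonexpansive (T : B.PathSpace ≃ B.PathSpace) : Prop :=
  ∀ k : ℕ, 1 ≤ k → ∃ x y : B.PathSpace, x ≠ y ∧ B.SameCoding T k x y

/-- Well timed: for every `k ≥ 1` and every `j > k` there is a depth `k` pair with
a `j` cut. -/
def WellTimed (T : B.PathSpace ≃ B.PathSpace) : Prop :=
  ∀ k : ℕ, 1 ≤ k → ∀ j : ℕ, k < j →
    ∃ x y : B.PathSpace, B.DepthPair T k x y ∧ B.HasCut T j x y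

/-- Very well timed: for every `k ≥ 1` there is a depth `k` pair having a `j` cut
for every `j > k`. -/
def VeryWellTimed (T : B.PathSpace ≃ B.PathSpace) : Prop :=
  ∀ k : ℕ, 1 ≤ k →
    ∃ x y : B.PathSpace, B.DepthPair T k x y ∧ ∀ j : ℕ, k < j → B.HasCut T j x y

/-- Weakly well timed: for infinitely many `k ≥ 1`, for every `j > k` there is a
depth `k` pair with a `j` cut. -/
def WeaklyWellTimed (T : B.PathSpace ≃ B.PathSpace) : Prop :=
  ∀ K : ℕ, ∃ k : ℕ, K ≤ k ∧ 1 ≤ k ∧ ∀ j : ℕ, k < j →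
    ∃ x y : B.PathSpace, B.DepthPair T k x y ∧ B.HasCut T j x y

/-- Untimed: for every `k ≥ 1` there is a `j > k` such that no depth `k` pair has a
`j` cut. -/
def Untimed (T : B.PathSpace ≃ B.PathSpace) : Prop :=
  ∀ k : ℕ, 1 ≤ k → ∃ j : ℕ, k < j ∧
    ∀ x y : B.PathSpace, B.DepthPair T k x y → ¬ B.HasCut T j x y

/-- Very untimed: for every `k ≥ 1`, no depth `k` pair has a `(k+1)` cut. -/
def VeryUntimed (T : B.PathSpace ≃ B.PathSpace) : Prop :=
  ∀ k : ℕ, 1 ≤ k →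
    ∀ x y : B.PathSpace, B.DepthPair T k x y → ¬ B.HasCut T (k + 1) x y

/-- Finite paths from the root to level `n`. -/
def FinPath (n : ℕ) : Type :=
  { f : (i : Fin n) → B.E i.val //
    ∀ (i : ℕ) (h : i + 1 < n), B.tgt (f ⟨i, by omega⟩) = B.src (f ⟨i + 1, h⟩) }

/-- The lexicographic (from the end) order on finite paths to level `n` induced by
the orders on the edges. -/
def finLT {n : ℕ} (p q : B.FinPath n) : Prop :=
  ∃ (N : ℕ) (h : N < n), B.elt (p.1 ⟨N, h⟩) (q.1 ⟨N, h⟩) ∧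
    ∀ (i : ℕ) (hi : i < n), N < i → p.1 ⟨i, hi⟩ = q.1 ⟨i, hi⟩

/-- The finite path `p` to level `n` ends at the vertex `v`. -/
def EndsAt {n : ℕ} (p : B.FinPath n) (v : B.V n) : Prop :=
  ∀ (m : ℕ) (h : n = m + 1), B.tgt (p.1 ⟨m, by omega⟩) = B.castV h v

/-- The initial segment of an infinite path, from the root to level `n`. -/
def pathInit (x : B.PathSpace) (n : ℕ) : B.FinPath n :=
  ⟨fun i => x.1 i.val, fun i _ => x.2 i⟩

/-- The vertex of an infinite path at level `n`. -/
def pathVert (x : B.PathSpace) (n : ℕ) : B.V n := B.src (x.1 n)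

theorem pathInit_endsAt (x : B.PathSpace) (n : ℕ) :
    B.EndsAt (B.pathInit x n) (B.pathVert x n) := by
  intro m h
  subst h
  exact x.2 m

/-- Truncation of a finite path to a lower level. -/
def truncTo {n : ℕ} (k : ℕ) (hk : k ≤ n) (p : B.FinPath n) : B.FinPath k :=
  ⟨fun i => p.1 ⟨i.val, by omega⟩, fun i h => p.2 i (by omega)⟩

/-- Paths `x, x'` are `k`-equivalent at level `n`: there is an order isomorphism
between the sets of finite paths from the root into their level-`n` vertices which
preserves truncations to level `k` (equality of `k`-basic blocks) and which matches
the initial segment of `x` with the initial segment of `x'` (the "dot" is in the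
same place). -/
def KEquivAt (k n : ℕ) (x x' : B.PathSpace) : Prop :=
  ∃ φ : { p : B.FinPath n // B.EndsAt p (B.pathVert x n) } ≃
      { p : B.FinPath n // B.EndsAt p (B.pathVert x' n) },
    (∀ p q, B.finLT p.1 q.1 ↔ B.finLT (φ p).1 (φ q).1) ∧
    (∀ p (i : ℕ) (hik : i < k) (hin : i < n), ((φ p).1).1 ⟨i, hin⟩ = (p.1).1 ⟨i, hin⟩) ∧
    φ ⟨B.pathInit x n, B.pathInit_endsAt x n⟩ = ⟨B.pathInit x' n, B.pathInit_endsAt x' n⟩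

/-- Paths are `k`-equivalent: they agree from the root to level `k` and are
`k`-equivalent at every level `n > k`. -/
def KEquivPaths (k : ℕ) (x x' : B.PathSpace) : Prop :=
  (∀ i : ℕ, i < k → x.1 i = x'.1 i) ∧ ∀ n : ℕ, k < n → B.KEquivAt k n x x'

/-- Standard nonexpansive: for every `k ≥ 1` there is a pair of distinct
`k`-equivalent paths. -/
def SNE : Prop := ∀ k : ℕ, 1 ≤ k → ∃ x x' : B.PathSpace, x ≠ x' ∧ B.KEquivPaths k x x'

/-!  ### Telescoping  -/

theorem castV_eq_of_heq {m n : ℕ} (h : m = n) {v : B.V m} {w : B.V n} (hw : HEq v w) :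
    B.castV h v = w := by
  subst h
  exact eq_of_heq hw

theorem castV_heq {m n : ℕ} (h : m = n) (v : B.V m) : HEq (B.castV h v) v := by
  subst h
  rfl

theorem castV_inj {m n : ℕ} (h : m = n) {v w : B.V m}
    (hvw : B.castV h v = B.castV h w) : v = w := by
  subst h
  exact hvw

def castE {m n : ℕ} (h : m = n) (e : B.E m) : B.E n := h ▸ e

noncomputable def chainFrom (a : ℕ) (v : B.V a) : (i : ℕ) → B.E (a + i)
  | 0 => (B.hasOut a v).choose
  | i + 1 => (B.hasOut (a + i + 1) (B.tgt (chainFrom a v i))).choose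

theorem chainFrom_src_zero (a : ℕ) (v : B.V a) : B.src (B.chainFrom a v 0) = v :=
  (B.hasOut a v).choose_spec

theorem chainFrom_src_succ (a : ℕ) (v : B.V a) (i : ℕ) :
    B.src (B.chainFrom a v (i + 1)) = B.tgt (B.chainFrom a v i) :=
  (B.hasOut (a + i + 1) (B.tgt (B.chainFrom a v i))).choose_spec

noncomputable def chainTo (a : ℕ) : (j : ℕ) → (w : B.V (a + j + 1)) → (i : ℕ) → i ≤ j → B.E (a + i)
  | 0, w, i, _ => B.castE (by omega : a + 0 = a + i) (B.hasIn a w).choose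
  | j + 1, w, i, _ =>
      if h : i ≤ j then chainTo a j (B.src (B.hasIn (a + j + 1) w).choose) i h
      else B.castE (by omega : a + (j + 1) = a + i) (B.hasIn (a + j + 1) w).choose

theorem chainTo_tgt_last (a : ℕ) : ∀ (j : ℕ) (w : B.V (a + j + 1)),
    B.tgt (B.chainTo a j w j le_rfl) = w := by
  intro j w
  cases j with
  | zero =>
      simp only [chainTo]
      exact (B.hasIn a w).choose_spec
  | succ j =>
      simp only [chainTo]
      rw [dif_neg (by omega : ¬ j + 1 ≤ j)]
      exact (B.hasIn (a + j + 1) w).choose_spec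

theorem chainTo_chain (a : ℕ) : ∀ (j : ℕ) (w : B.V (a + j + 1)) (i : ℕ) (h : i + 1 ≤ j)
    (h' : i ≤ j), B.tgt (B.chainTo a j w i h') = B.src (B.chainTo a j w (i + 1) h) := by
  intro j
  induction j with
  | zero => intro w i h h'; omega
  | succ j ih =>
      intro w i h h'
      by_cases hij : i + 1 ≤ j
      · simp only [chainTo]
        rw [dif_pos (by omega : i ≤ j), dif_pos hij]
        exact ih _ i hij (by omega)
      · have hi : i = j := by omega
        subst hi
        simp only [chainTo]
        rw [dif_pos (le_refl i), dif_neg (by omega : ¬ i + 1 ≤ i)]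
        exact B.chainTo_tgt_last a i _


def TelE (a b : ℕ) : Type :=
  { f : (i : Fin (b - a)) → B.E (a + i.val) //
    ∀ (i : ℕ) (h : i + 1 < b - a), B.tgt (f ⟨i, by omega⟩) = B.src (f ⟨i + 1, h⟩) }

def telSrc {a b : ℕ} (hab : a < b) (f : B.TelE a b) : B.V a :=
  B.src (f.1 ⟨0, by omega⟩)

def telTgt {a b : ℕ} (hab : a < b) (f : B.TelE a b) : B.V b :=
  B.castV (by omega : a + (b - a - 1) + 1 = b) (B.tgt (f.1 ⟨b - a - 1, by omega⟩))

def telLT {a b : ℕ} (f g : B.TelE a b) : Prop :=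
  ∃ (N : ℕ) (h : N < b - a), B.elt (f.1 ⟨N, h⟩) (g.1 ⟨N, h⟩) ∧
    ∀ (i : ℕ) (hi : i < b - a), N < i → f.1 ⟨i, hi⟩ = g.1 ⟨i, hi⟩

noncomputable def Telescope (ns : ℕ → ℕ) (hmono : StrictMono ns) (h0 : ns 0 = 0) : BDiagram where
  V l := B.V (ns l)
  E l := B.TelE (ns l) (ns (l + 1))
  fintV l := B.fintV (ns l)
  fintE l := by
    classical
    letI : ∀ i : Fin (ns (l + 1) - ns l), Fintype (B.E (ns l + i.val)) := fun i => B.fintE _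
    exact Subtype.fintype _
  nonV l := B.nonV (ns l)
  rootSubsingleton := by show Subsingleton (B.V (ns 0)); rw [h0]; exact B.rootSubsingleton
  src {l} f := B.telSrc (hmono (Nat.lt_succ_self l)) f
  tgt {l} f := B.telTgt (hmono (Nat.lt_succ_self l)) f
  hasOut := by
    intro l v
    refine ⟨⟨fun i => B.chainFrom (ns l) v i.val,
      fun i h => (B.chainFrom_src_succ (ns l) v i).symm⟩, ?_⟩
    exact B.chainFrom_src_zero (ns l) v
  hasIn := by
    intro l w
    have hab : ns l < ns (l + 1) := hmono (Nat.lt_succ_self l)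
    have hj : ns l + (ns (l + 1) - ns l - 1) + 1 = ns (l + 1) := by omega
    refine ⟨⟨fun i => B.chainTo (ns l) (ns (l + 1) - ns l - 1) (B.castV hj.symm w) i.val
        (by omega), fun i h => B.chainTo_chain _ _ _ i (by omega) (by omega)⟩, ?_⟩
    show B.castV (by omega) (B.tgt (B.chainTo (ns l) (ns (l + 1) - ns l - 1)
      (B.castV hj.symm w) (ns (l + 1) - ns l - 1) (by omega))) = w
    rw [B.chainTo_tgt_last]
    exact B.castV_eq_of_heq _ (B.castV_heq _ w)
  elt {l} f g := B.telLT f g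
  elt_tgt := by
    rintro l f g ⟨N, hN, hlt, hgt⟩
    show B.telTgt _ f = B.telTgt _ g
    unfold telTgt
    refine congrArg (B.castV _) ?_
    rcases eq_or_lt_of_le (show N ≤ ns (l + 1) - ns l - 1 by omega) with h | h
    · subst h
      exact B.elt_tgt _ _ _ hlt
    · exact congrArg B.tgt (hgt _ (by omega) h)
  elt_irrefl := by
    rintro l f ⟨N, h, hlt, -⟩
    exact B.elt_irrefl _ _ hlt
  elt_trans := by
    rintro l f g h ⟨N₁, hN₁, hlt₁, hgt₁⟩ ⟨N₂, hN₂, hlt₂, hgt₂⟩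
    rcases lt_trichotomy N₁ N₂ with hc | hc | hc
    · exact ⟨N₂, hN₂, by rw [hgt₁ N₂ hN₂ hc]; exact hlt₂,
        fun i hi hN => (hgt₁ i hi (by omega)).trans (hgt₂ i hi hN)⟩
    · subst hc
      exact ⟨N₁, hN₁, B.elt_trans _ _ _ _ hlt₁ hlt₂,
        fun i hi hN => (hgt₁ i hi hN).trans (hgt₂ i hi hN)⟩
    · refine ⟨N₁, hN₁, ?_, fun i hi hN => (hgt₁ i hi hN).trans (hgt₂ i hi (by omega))⟩
      rw [← hgt₂ N₁ hN₁ hc]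
      exact hlt₁
  elt_total := by
    intro l f g htgt hne
    classical
    have hab : ns l < ns (l + 1) := hmono (Nat.lt_succ_self l)
    set b := ns (l + 1) - ns l with hb
    have hex : ∃ N, ∃ h : N < b, f.1 ⟨N, h⟩ ≠ g.1 ⟨N, h⟩ := by
      by_contra hco
      push_neg at hco
      exact hne (Subtype.ext (funext fun i => hco i.val i.isLt))
    set P : ℕ → Prop := fun N => ∃ h : N < b, f.1 ⟨N, h⟩ ≠ g.1 ⟨N, h⟩ with hP
    obtain ⟨N₀, hN₀⟩ := hex
    set N := Nat.findGreatest P b with hNdef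
    have hPN : P N := Nat.findGreatest_spec (le_of_lt hN₀.choose) hN₀
    have hafter : ∀ i (hi : i < b), N < i → f.1 ⟨i, hi⟩ = g.1 ⟨i, hi⟩ := by
      intro i hi hNi
      by_contra hcon
      exact Nat.findGreatest_is_greatest hNi (le_of_lt hi) ⟨hi, hcon⟩
    clear_value N
    obtain ⟨hNb, hNne⟩ := hPN
    have htgtN : B.tgt (f.1 ⟨N, hNb⟩) = B.tgt (g.1 ⟨N, hNb⟩) := by
      rcases eq_or_lt_of_le (show N ≤ b - 1 by omega) with h | h
      · -- N is the last index; use equality of targets of the composite edges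
        subst h
        exact B.castV_inj _ htgt
      · have h2 : f.1 ⟨N + 1, by omega⟩ = g.1 ⟨N + 1, by omega⟩ :=
          hafter (N + 1) (by omega) (by omega)
        rw [f.2 N (by omega), g.2 N (by omega), h2]
    rcases B.elt_total _ _ _ htgtN hNne with h | h
    · exact Or.inl ⟨N, hNb, h, hafter⟩
    · exact Or.inr ⟨N, hNb, h, fun i hi hN => (hafter i hi hN).symm⟩

def teleMap (ns : ℕ → ℕ) (hmono : StrictMono ns) (h0 : ns 0 = 0) (x : B.PathSpace) :
    (B.Telescope ns hmono h0).PathSpace :=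
  ⟨fun l => ⟨fun i => x.1 (ns l + i.val), fun i _ => x.2 (ns l + i)⟩, fun l => by
    have hab : ns l < ns (l + 1) := hmono (Nat.lt_succ_self l)
    have hm : ns l + (ns (l + 1) - ns l - 1) + 1 = ns (l + 1) := by omega
    show B.castV _ (B.tgt (x.1 (ns l + (ns (l + 1) - ns l - 1)))) = B.src (x.1 (ns (l + 1) + 0))
    rw [x.2 (ns l + (ns (l + 1) - ns l - 1))]
    exact B.castV_eq_of_heq _ (by rw [hm]; exact HEq.rfl)⟩


/-- Level `n+1` is uniformly ordered: there is a single nonempty block `P` of paths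
from the root to level `n` such that the `n`-basic block at every vertex at level
`n+1` is a positive power of `P`. -/
def UniformlyOrderedLevel (n : ℕ) : Prop :=
  ∃ (p : ℕ) (hp : 0 < p) (P : Fin p → B.FinPath n),
    ∀ v : B.V (n + 1), ∃ (m : ℕ), 0 < m ∧
      ∃ enum : Fin (m * p) ≃ { q : B.FinPath (n + 1) // B.EndsAt q v },
        (∀ i j : Fin (m * p), i < j ↔ B.finLT (enum i).1 (enum j).1) ∧
        (∀ i : Fin (m * p),
          B.truncTo n (Nat.le_succ n) (enum i).1 = P ⟨i.val % p, Nat.mod_lt _ hp⟩)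

/-- The ordinal label of an edge: its position in the linear order on the edges
into its target. -/
noncomputable def edgeLabel {n : ℕ} (e : B.E n) : ℕ := Nat.card { e' : B.E n // B.elt e' e }

/-- Deterministic: for every `n ≥ 1`, distinct edges with the same source at level
`n` have different ordinal labels. -/
def Deterministic : Prop :=
  ∀ n : ℕ, 1 ≤ n → ∀ e f : B.E n, B.src e = B.src f → e ≠ f →
    B.edgeLabel e ≠ B.edgeLabel f

end BDiagram

/-- A Bratteli–Vershik system: a simple, properly ordered ordered Bratteli diagram
together with its Vershik map. -/
structure BVSystem where
  B : BDiagram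
  T : B.PathSpace ≃ B.PathSpace
  proper : B.ProperlyOrdered
  simple : B.Simple
  vershik : B.IsVershik T

/-- Conjugacy of systems: an equivariant homeomorphism of the path spaces taking
minimal paths to minimal paths. -/
def Conjugate (S S' : BVSystem) : Prop :=
  ∃ φ : S.B.PathSpace ≃ S'.B.PathSpace,
    (@Continuous _ _ S.B.pathTop S'.B.pathTop φ) ∧
    (@Continuous _ _ S'.B.pathTop S.B.pathTop φ.symm) ∧
    (∀ x, φ (S.T x) = S'.T (φ x)) ∧
    (∀ x, S.B.IsMinPath x → S'.B.IsMinPath (φ x))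

/-- An odometer: a system whose diagram has exactly one vertex at every level. -/
def IsOdometer (S : BVSystem) : Prop := ∀ n, Subsingleton (S.B.V n)

/-!
(1) → (2): pick levels `0 = n₀ < n₁ < ⋯` each of which is *timed* (for every `j` above it,
some depth pair of that depth has a `j` cut). Telescoping to these levels turns them into
consecutive levels and carries depth pairs and cuts along, so the telescoping is well timed.

(2) → (3): a telescoping of a simple properly ordered diagram is again simple and properly
ordered, and the natural bijection of path spaces is a conjugacy.

(3) → (1): a conjugacy and its inverse are uniformly continuous, so they move coding depths
only within bounded windows: depth `k` pairs of the well timed system pull back to pairs whose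
depth lies in a fixed window `[K, N)`. The conjugacy fixes the unique minimal path, so long
cuts pull back to long cuts. As the window is finite, one depth in it is timed, and `K` is
arbitrary.
-/

theorem Equiv.apply_zpow_apply {α β : Type*} (φ : α ≃ β) {T : Equiv.Perm α}
    {T' : Equiv.Perm β} (h : ∀ x, φ (T x) = T' (φ x)) (m : ℤ) (x : α) :
    φ ((T ^ m) x) = (T' ^ m) (φ x) := by
  have hT : φ.permCongrHom T = T' := Equiv.ext fun y => by
    simpa [Equiv.permCongrHom] using h (φ.symm y)
  rw [← hT, ← map_zpow]
  simp [Equiv.permCongrHom]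

namespace BDiagram

variable {B : BDiagram}

theorem pathVert_succ (x : B.PathSpace) (n : ℕ) : B.pathVert x (n + 1) = B.tgt (x.1 n) :=
  (x.2 n).symm

def glue (f g : ∀ i, B.E i) (m : ℕ) : ∀ i, B.E i := fun i => if i < m then f i else g i

theorem glue_of_lt (f g : ∀ i, B.E i) {m i : ℕ} (h : i < m) : glue f g m i = f i := if_pos h

theorem glue_of_le (f g : ∀ i, B.E i) {m i : ℕ} (h : m ≤ i) : glue f g m i = g i :=
  if_neg (Nat.not_lt.2 h)

theorem glue_chain {f g : ∀ i, B.E i} {l m : ℕ}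
    (hf : ∀ i, l ≤ i → i + 1 < m → B.tgt (f i) = B.src (f (i + 1)))
    (hg : ∀ i, m ≤ i → B.tgt (g i) = B.src (g (i + 1)))
    (hfg : ∀ i, l ≤ i → i + 1 = m → B.tgt (f i) = B.src (g (i + 1))) {i : ℕ}
    (hi : l ≤ i) :
    B.tgt (glue f g m i) = B.src (glue f g m (i + 1)) := by
  rcases lt_trichotomy (i + 1) m with h | h | h
  · rw [glue_of_lt f g (by omega), glue_of_lt f g h]; exact hf i hi h
  · rw [glue_of_lt f g (by omega), glue_of_le f g h.ge]; exact hfg i hi h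
  · rw [glue_of_le f g (by omega), glue_of_le f g (by omega)]; exact hg i (by omega)

def splice (x y : B.PathSpace) (m : ℕ) (h : B.pathVert x m = B.pathVert y m) : B.PathSpace :=
  ⟨glue x.1 y.1 m, fun _ => glue_chain (fun i _ _ => x.2 i) (fun i _ => y.2 i)
    (fun i _ hi => by subst hi; exact (x.2 i).trans h) (Nat.zero_le _)⟩

theorem splice_of_lt {x y : B.PathSpace} {m : ℕ} (h : B.pathVert x m = B.pathVert y m) {i : ℕ}
    (hi : i < m) : (splice x y m h).1 i = x.1 i := glue_of_lt _ _ hi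

theorem splice_of_le {x y : B.PathSpace} {m : ℕ} (h : B.pathVert x m = B.pathVert y m) {i : ℕ}
    (hi : m ≤ i) : (splice x y m h).1 i = y.1 i := glue_of_le _ _ hi

theorem pathVert_splice_of_le {x y : B.PathSpace} {m : ℕ}
    (h : B.pathVert x m = B.pathVert y m) {i : ℕ} (hi : i ≤ m) :
    B.pathVert (splice x y m h) i = B.pathVert x i := by
  rcases hi.lt_or_eq with hi | rfl
  · exact congrArg B.src (splice_of_lt h hi)
  · exact (congrArg B.src (splice_of_le h le_rfl)).trans h.symm

theorem pathVert_splice_of_ge {x y : B.PathSpace} {m : ℕ}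
    (h : B.pathVert x m = B.pathVert y m) {i : ℕ} (hi : m ≤ i) :
    B.pathVert (splice x y m h) i = B.pathVert y i :=
  congrArg B.src (splice_of_le h hi)

noncomputable def chainUp {n : ℕ} (e : B.E n) : ∀ i, B.E i
  | 0 => if h : n = 0 then h ▸ e else (B.hasOut 0 (Classical.choice (B.nonV 0))).choose
  | i + 1 => if h : n = i + 1 then h ▸ e else (B.hasOut (i + 1) (B.tgt (chainUp e i))).choose

theorem chainUp_self {n : ℕ} (e : B.E n) : chainUp e n = e := by
  cases n <;> simp [chainUp]

theorem chainUp_chain {n : ℕ} (e : B.E n) {i : ℕ} (hi : n ≤ i) :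
    B.tgt (chainUp e i) = B.src (chainUp e (i + 1)) := by
  rw [chainUp, dif_neg (by omega)]
  exact ((B.hasOut (i + 1) _).choose_spec).symm

noncomputable def chainDown : ∀ {n : ℕ}, B.E n → ∀ i, B.E i
  | 0, e, i => if h : 0 = i then h ▸ e else chainUp e i
  | n + 1, e, i => if h : n + 1 = i then h ▸ e else chainDown (B.hasIn n (B.src e)).choose i

theorem chainDown_self {n : ℕ} (e : B.E n) : chainDown e n = e := by
  cases n <;> simp [chainDown]

theorem chainDown_chain : ∀ {n : ℕ} (e : B.E n) {i : ℕ}, i < n →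
    B.tgt (chainDown e i) = B.src (chainDown e (i + 1))
  | 0, _, _, h => absurd h (Nat.not_lt_zero _)
  | n + 1, e, i, h => by
    rcases (Nat.lt_succ_iff.1 h).lt_or_eq with h | rfl
    · rw [chainDown, chainDown, dif_neg (by omega), dif_neg (by omega)]
      exact chainDown_chain _ h
    · rw [chainDown, chainDown, dif_neg (by omega), dif_pos rfl, chainDown_self]
      exact (B.hasIn i (B.src e)).choose_spec

noncomputable def pathThrough {n : ℕ} (e : B.E n) : B.PathSpace :=
  ⟨glue (chainDown e) (chainUp e) n, fun _ =>
    glue_chain (fun i _ hi => chainDown_chain e (by omega)) (fun i hi => chainUp_chain e hi)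
      (fun i _ hi => by
        subst hi; rw [chainDown_chain e (Nat.lt_succ_self i), chainDown_self, chainUp_self])
      (Nat.zero_le _)⟩

theorem pathThrough_self {n : ℕ} (e : B.E n) : (pathThrough e).1 n = e :=
  (glue_of_le _ _ le_rfl).trans (chainUp_self e)

theorem exists_pathVert_eq {n : ℕ} (v : B.V n) : ∃ x : B.PathSpace, B.pathVert x n = v := by
  obtain ⟨e, he⟩ := B.hasOut n v
  exact ⟨pathThrough e, (congrArg B.src (pathThrough_self e)).trans he⟩

theorem exists_replace_edge {x : B.PathSpace} {n : ℕ} (e : B.E n)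
    (he : B.tgt e = B.tgt (x.1 n)) :
    ∃ z : B.PathSpace, z.1 n = e ∧ ∀ m, n < m → z.1 m = x.1 m := by
  have h : B.pathVert (pathThrough e) (n + 1) = B.pathVert x (n + 1) := by
    rw [pathVert_succ, pathVert_succ, pathThrough_self, he]
  exact ⟨splice _ x (n + 1) h, (splice_of_lt h (Nat.lt_succ_self n)).trans (pathThrough_self e),
    fun m hm => splice_of_le h hm⟩

theorem isMinPath_iff (x : B.PathSpace) : B.IsMinPath x ↔ ∀ z, ¬ B.pathLT z x := by
  refine ⟨fun h z ⟨N, hlt, _⟩ => h N _ hlt, fun h n e hlt => ?_⟩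
  obtain ⟨z, hzn, hz⟩ := exists_replace_edge e (B.elt_tgt n _ _ hlt)
  exact h z ⟨n, hzn ▸ hlt, hz⟩

theorem isMaxPath_iff (x : B.PathSpace) : B.IsMaxPath x ↔ ∀ z, ¬ B.pathLT x z := by
  refine ⟨fun h z ⟨N, hlt, _⟩ => h N _ hlt, fun h n e hlt => ?_⟩
  obtain ⟨z, hzn, hz⟩ := exists_replace_edge e (B.elt_tgt n _ _ hlt).symm
  exact h z ⟨n, hzn ▸ hlt, fun m hm => (hz m hm).symm⟩

theorem pathLT_trichotomy_of_pathLT {x y z : B.PathSpace} (hxy : B.pathLT x y)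
    (hxz : B.pathLT x z) : y = z ∨ B.pathLT y z ∨ B.pathLT z y := by
  classical
  by_cases hyz : y = z
  · exact Or.inl hyz
  obtain ⟨N₁, -, hy⟩ := hxy
  obtain ⟨N₂, -, hz⟩ := hxz
  have hex : ∃ n, y.1 n ≠ z.1 n := by
    by_contra! h
    exact hyz (Subtype.ext (funext h))
  have hbound : ∀ n, y.1 n ≠ z.1 n → n ≤ max N₁ N₂ := fun n hn => by
    by_contra! h
    exact hn ((hy n (by omega)).symm.trans (hz n (by omega)))
  -- the last level where `y` and `z` differ
  set N := Nat.findGreatest (fun n => y.1 n ≠ z.1 n) (max N₁ N₂)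
  obtain ⟨n₀, hn₀⟩ := hex
  have hN : y.1 N ≠ z.1 N :=
    Nat.findGreatest_spec (P := fun n => y.1 n ≠ z.1 n) (hbound n₀ hn₀) hn₀
  have habove : ∀ n, N < n → y.1 n = z.1 n := fun n hn => by
    by_contra h
    exact Nat.findGreatest_is_greatest hn (hbound n h) h
  have htgt : B.tgt (y.1 N) = B.tgt (z.1 N) := by
    rw [y.2 N, z.2 N, habove (N + 1) (Nat.lt_succ_self N)]
  rcases B.elt_total N _ _ htgt hN with h | h
  · exact Or.inr (Or.inl ⟨N, h, habove⟩)
  · exact Or.inr (Or.inr ⟨N, h, fun n hn => (habove n hn).symm⟩)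

theorem IsVershik.unique (hmin : ∃! x : B.PathSpace, B.IsMinPath x)
    {T₁ T₂ : B.PathSpace ≃ B.PathSpace} (h₁ : B.IsVershik T₁) (h₂ : B.IsVershik T₂) :
    T₁ = T₂ := by
  ext1 x
  by_cases hx : B.IsMaxPath x
  · exact hmin.unique (h₁.2 x hx) (h₂.2 x hx)
  obtain ⟨hlt₁, hnext₁⟩ := h₁.1 x hx
  obtain ⟨hlt₂, hnext₂⟩ := h₂.1 x hx
  rcases pathLT_trichotomy_of_pathLT hlt₁ hlt₂ with h | h | h
  · exact h
  · exact absurd h (hnext₂ _ hlt₁)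
  · exact absurd h (hnext₁ _ hlt₂)

variable (B) in
def FullyConnected (a b : ℕ) : Prop :=
  ∀ (v : B.V a) (w : B.V b), ∃ x : B.PathSpace, B.pathVert x a = v ∧ B.pathVert x b = w

theorem FullyConnected.mono {a b a' b' : ℕ} (h : B.FullyConnected a' b') (ha : a ≤ a')
    (hab : a' ≤ b') (hb : b' ≤ b) : B.FullyConnected a b := by
  intro v w
  obtain ⟨xv, hxv⟩ := exists_pathVert_eq v
  obtain ⟨xw, hxw⟩ := exists_pathVert_eq w
  obtain ⟨x, hx, hx'⟩ := h (B.pathVert xv a') (B.pathVert xw b')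
  have h₁ : B.pathVert xv a' = B.pathVert x a' := hx.symm
  have h₂ : B.pathVert (splice xv x a' h₁) b' = B.pathVert xw b' := by
    rw [pathVert_splice_of_ge h₁ hab, hx']
  refine ⟨splice _ xw b' h₂, ?_, ?_⟩
  · rw [pathVert_splice_of_le h₂ (ha.trans hab), pathVert_splice_of_le h₁ ha, hxv]
  · rw [pathVert_splice_of_ge h₂ hb, hxw]

theorem fullyConnected_of_segOn {a c : ℕ} (h : ∀ (v : B.V a) (w : B.V (c + 1)),
    ∃ f : ∀ i, B.E i, B.SegOn f a (c + 1) ∧ B.src (f a) = v ∧ B.tgt (f c) = w)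
    (hac : a ≤ c) : B.FullyConnected a (c + 1) := by
  intro v w
  obtain ⟨f, hf, hfv, hfw⟩ := h v w
  obtain ⟨xv, hxv⟩ := exists_pathVert_eq v
  obtain ⟨xw, hxw⟩ := exists_pathVert_eq w
  have hinner : ∀ i, a ≤ i → B.tgt (glue f xw.1 (c + 1) i) =
      B.src (glue f xw.1 (c + 1) (i + 1)) := fun _ =>
    glue_chain (fun i hi hic => hf i hi hic) (fun i _ => xw.2 i) (fun i _ hi => by
      obtain rfl : i = c := by omega
      rw [hfw, ← hxw]; rfl)
  have hchain : ∀ i, B.tgt (glue xv.1 (glue f xw.1 (c + 1)) a i) =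
      B.src (glue xv.1 (glue f xw.1 (c + 1)) a (i + 1)) := fun _ =>
    glue_chain (fun i _ _ => xv.2 i) hinner (fun i _ hi => by
        subst hi; rw [glue_of_lt f xw.1 (by omega), hfv, ← hxv]; exact xv.2 i)
      (Nat.zero_le _)
  refine ⟨⟨_, hchain⟩, ?_, ?_⟩
  · show B.src (glue _ _ a a) = v
    rw [glue_of_le _ _ le_rfl, glue_of_lt _ _ (by omega), hfv]
  · show B.src (glue _ _ a (c + 1)) = w
    rw [glue_of_le _ _ (by omega), glue_of_le _ _ le_rfl]; exact hxw

theorem simple_iff_fullyConnected :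
    B.Simple ↔ ∀ a, ∃ b, a < b ∧ B.FullyConnected a b := by
  constructor
  · rintro ⟨ns, hmono, -, hconn⟩ a
    have hlt : ns a < ns (a + 1) := hmono (by omega)
    have hstep : B.FullyConnected (ns a) (ns (a + 1)) := by
      obtain ⟨c, hc⟩ : ∃ c, ns (a + 1) = c + 1 := ⟨ns (a + 1) - 1, by omega⟩
      rw [hc]
      exact fullyConnected_of_segOn (hconn a c hc) (by omega)
    exact ⟨ns (a + 1), hmono.le_apply.trans_lt hlt, hstep.mono hmono.le_apply hlt.le le_rfl⟩
  · intro h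
    choose next hlt hconn using h
    refine ⟨fun l => next^[l] 0, strictMono_nat_of_lt_succ fun l => ?_, rfl, ?_⟩
    · simp only [Function.iterate_succ_apply']; exact hlt _
    · intro l c hc v w
      simp only [Function.iterate_succ_apply'] at hc ⊢
      have hvw := hconn (next^[l] 0)
      rw [hc] at hvw
      obtain ⟨x, hxv, hxw⟩ := hvw v w
      exact ⟨x.1, fun i _ _ => x.2 i, hxv, (x.2 c).trans hxw⟩

section Coding

variable {T : B.PathSpace ≃ B.PathSpace} {x y : B.PathSpace}

theorem SameCoding.mono {k k' : ℕ} (h : B.SameCoding T k x y) (hk : k' ≤ k) :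
    B.SameCoding T k' x y :=
  fun m i hi => h m i (hi.trans_le hk)

theorem HasCut.mono {j j' : ℕ} (h : B.HasCut T j x y) (hj : j' ≤ j) : B.HasCut T j' x y :=
  let ⟨m, hx, hy⟩ := h
  ⟨m, fun i hi => hx i (hi.trans_le hj), fun i hi => hy i (hi.trans_le hj)⟩

variable (B) in
def TimedAt (T : B.PathSpace ≃ B.PathSpace) (k : ℕ) : Prop :=
  ∀ j, k < j → ∃ x y : B.PathSpace, B.DepthPair T k x y ∧ B.HasCut T j x y

theorem exists_depthPair_of_sameCoding (hxy : x ≠ y) {k n : ℕ} (hk : B.SameCoding T k x y)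
    (hn : ¬ B.SameCoding T n x y) : ∃ d, k ≤ d ∧ d < n ∧ B.DepthPair T d x y := by
  classical
  have hex : ∃ n, ¬ B.SameCoding T n x y := ⟨n, hn⟩
  have hpos : k < Nat.find hex := by
    by_contra! h
    exact Nat.find_spec hex (hk.mono h)
  obtain ⟨d, hd⟩ : ∃ d, Nat.find hex = d + 1 := ⟨Nat.find hex - 1, by omega⟩
  have hle : d + 1 ≤ n := hd ▸ Nat.find_min' hex hn
  refine ⟨d, by omega, by omega, hxy, ?_, hd ▸ Nat.find_spec hex⟩
  exact not_not.1 (Nat.find_min hex (by omega))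

theorem exists_timedAt_of_forall_exists_depthPair {K N : ℕ}
    (h : ∀ j, ∃ d x y, K ≤ d ∧ d < N ∧ B.DepthPair T d x y ∧ B.HasCut T j x y) :
    ∃ d, K ≤ d ∧ B.TimedAt T d := by
  -- if no depth in `[K, N)` were timed, one `j` would defeat all of them at once
  by_contra! hno
  simp only [TimedAt, not_forall, not_exists, not_and] at hno
  have hev : ∀ d ∈ Finset.Ico K N, ∀ᶠ j in Filter.atTop,
      ∀ x y, B.DepthPair T d x y → ¬ B.HasCut T j x y := by
    intro d hd
    obtain ⟨j₀, -, hj₀⟩ := hno d (Finset.mem_Ico.1 hd).1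
    exact Filter.eventually_atTop.2
      ⟨j₀, fun j hj x y hxy hcut => hj₀ x y hxy (hcut.mono hj)⟩
  obtain ⟨j, hj⟩ := ((Filter.eventually_all_finset _).2 hev).exists
  obtain ⟨d, x, y, hKd, hdN, hxy, hcut⟩ := h j
  exact hj d (Finset.mem_Ico.2 ⟨hKd, hdN⟩) x y hxy hcut

theorem weaklyWellTimed_of_wellTimed {B' : BDiagram} {T' : B'.PathSpace ≃ B'.PathSpace}
    (hWT : B'.WellTimed T') (ψ : B'.PathSpace → B.PathSpace) (hψ : Function.Injective ψ)
    (hcode : ∀ r, ∃ R, ∀ x y, B'.SameCoding T' R x y → B.SameCoding T r (ψ x) (ψ y))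
    (hcode' : ∀ r, ∃ R, ∀ x y, B.SameCoding T R (ψ x) (ψ y) → B'.SameCoding T' r x y)
    (hcut : ∀ j, ∃ J, ∀ x y, B'.HasCut T' J x y → B.HasCut T j (ψ x) (ψ y)) :
    B.WeaklyWellTimed T := by
  intro K
  obtain ⟨R, hR⟩ := hcode (max K 1)
  obtain ⟨N, hN⟩ := hcode' (max R 1 + 1)
  have hpairs : ∀ j, ∃ d x y,
      max K 1 ≤ d ∧ d < N ∧ B.DepthPair T d x y ∧ B.HasCut T j x y := by
    intro j
    obtain ⟨J, hJ⟩ := hcut j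
    obtain ⟨x, y, ⟨hxy, hsame, hdiff⟩, hxyJ⟩ :=
      hWT (max R 1) (le_max_right _ _) (max J (max R 1 + 1)) (by omega)
    obtain ⟨d, hKd, hdN, hd⟩ := exists_depthPair_of_sameCoding (hψ.ne hxy)
      (hR x y (hsame.mono (le_max_left _ _))) (fun h => hdiff (hN x y h))
    exact ⟨d, ψ x, ψ y, hKd, hdN, hd, hJ x y (hxyJ.mono (le_max_left _ _))⟩
  obtain ⟨d, hKd, hd⟩ := exists_timedAt_of_forall_exists_depthPair hpairs
  exact ⟨d, le_of_max_le_left hKd, le_of_max_le_right hKd, hd⟩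

end Coding

theorem castE_heq {m n : ℕ} (h : m = n) (e : B.E m) : HEq (B.castE h e) e := by
  subst h; rfl

theorem src_castE {m n : ℕ} (h : m = n) (e : B.E m) :
    B.src (B.castE h e) = B.castV h (B.src e) := by subst h; rfl

theorem tgt_castE {m n : ℕ} (h : m = n) (e : B.E m) :
    B.tgt (B.castE h e) = B.castV (by rw [h]) (B.tgt e) := by subst h; rfl

theorem castV_eq_castV {m n k : ℕ} (h₁ : m = k) (h₂ : n = k) {u : B.V m} {w : B.V n}
    (huw : HEq u w) : B.castV h₁ u = B.castV h₂ w := by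
  subst h₁ h₂; exact eq_of_heq huw

section Telescope

variable (ns : ℕ → ℕ)

/-- The index `l` of the telescoped level with `ns l ≤ i < ns (l + 1)`. -/
noncomputable def levelOf (i : ℕ) : ℕ := Nat.findGreatest (fun l => ns l ≤ i) i

variable {ns}

theorem ns_levelOf_le (h0 : ns 0 = 0) (i : ℕ) : ns (levelOf ns i) ≤ i :=
  Nat.findGreatest_spec (P := fun l => ns l ≤ i) (Nat.zero_le i) (h0.trans_le (Nat.zero_le i))

theorem lt_ns_levelOf_succ (hmono : StrictMono ns) (i : ℕ) : i < ns (levelOf ns i + 1) := by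
  by_contra! h
  exact Nat.findGreatest_is_greatest (P := fun l => ns l ≤ i) (Nat.lt_succ_self _)
    (hmono.le_apply.trans h) h

theorem levelOf_eq (hmono : StrictMono ns) (h0 : ns 0 = 0) {l i : ℕ} (h₁ : ns l ≤ i)
    (h₂ : i < ns (l + 1)) : levelOf ns i = l := by
  have h₃ := ns_levelOf_le h0 i
  have h₄ := lt_ns_levelOf_succ hmono i
  apply le_antisymm
  · exact Nat.lt_succ_iff.1 (hmono.lt_iff_lt.1 (h₃.trans_lt h₂))
  · exact Nat.lt_succ_iff.1 (hmono.lt_iff_lt.1 (h₁.trans_lt h₄))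

variable (ns) (hmono : StrictMono ns) (h0 : ns 0 = 0)

noncomputable def untelescopeEdge (y : (B.Telescope ns hmono h0).PathSpace) (i : ℕ) : B.E i :=
  have h₁ := ns_levelOf_le h0 i
  have h₂ := lt_ns_levelOf_succ hmono i
  B.castE (show ns (levelOf ns i) + (i - ns (levelOf ns i)) = i by omega)
    ((y.1 (levelOf ns i)).1 ⟨i - ns (levelOf ns i), by omega⟩)

variable {ns hmono h0}

theorem untelescopeEdge_eq (y : (B.Telescope ns hmono h0).PathSpace) {i l : ℕ}
    (h₁ : ns l ≤ i) (h₂ : i < ns (l + 1)) :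
    untelescopeEdge ns hmono h0 y i =
      B.castE (show ns l + (i - ns l) = i by omega)
        ((y.1 l).1 ⟨i - ns l, show i - ns l < ns (l + 1) - ns l by omega⟩) := by
  obtain rfl := levelOf_eq hmono h0 h₁ h₂
  rfl

theorem untelescopeEdge_chain (y : (B.Telescope ns hmono h0).PathSpace) (i : ℕ) :
    B.tgt (untelescopeEdge ns hmono h0 y i) = B.src (untelescopeEdge ns hmono h0 y (i + 1)) := by
  set l := levelOf ns i
  have h₁ : ns l ≤ i := ns_levelOf_le h0 i
  have h₂ : i < ns (l + 1) := lt_ns_levelOf_succ hmono i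
  have hl : ns l < ns (l + 1) := hmono (Nat.lt_succ_self l)
  rw [untelescopeEdge_eq y h₁ h₂, tgt_castE]
  rcases (Nat.succ_le_of_lt h₂).lt_or_eq with hin | hbd
  · rw [untelescopeEdge_eq y (l := l) (by omega) hin, src_castE]
    exact castV_eq_castV _ _ ((heq_of_eq ((y.1 l).2 (i - ns l) (by omega))).trans
      (congr_arg_heq (fun s => B.src ((y.1 l).1 s)) (Fin.ext (by simp; omega))))
  · -- `i` is the last level of block `l`: use the compatibility of consecutive blocks
    have hl' : ns (l + 1) < ns (l + 1 + 1) := hmono (Nat.lt_succ_self _)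
    rw [untelescopeEdge_eq y (l := l + 1) (by omega) (by omega), src_castE]
    apply castV_eq_castV
    have hy : B.castV (show ns l + (ns (l + 1) - ns l - 1) + 1 = ns (l + 1) by omega)
        (B.tgt ((y.1 l).1 ⟨ns (l + 1) - ns l - 1, by omega⟩)) =
        B.src ((y.1 (l + 1)).1 ⟨0, by omega⟩) := y.2 l
    refine (congr_arg_heq (fun s => B.tgt ((y.1 l).1 s)) (Fin.ext (by simp; omega))).trans
      (((B.castV_heq _ _).symm.trans (heq_of_eq hy)).trans ?_)
    exact congr_arg_heq (fun s => B.src ((y.1 (l + 1)).1 s)) (Fin.ext (by simp; omega))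

variable (ns hmono h0)

noncomputable def untelescope (y : (B.Telescope ns hmono h0).PathSpace) : B.PathSpace :=
  ⟨untelescopeEdge ns hmono h0 y, untelescopeEdge_chain y⟩

theorem untelescope_teleMap (x : B.PathSpace) :
    untelescope ns hmono h0 (B.teleMap ns hmono h0 x) = x := by
  refine Subtype.ext (funext fun i => ?_)
  have h₁ := ns_levelOf_le h0 i
  refine (untelescopeEdge_eq _ h₁ (lt_ns_levelOf_succ hmono i)).trans ?_
  exact eq_of_heq ((B.castE_heq _ _).trans (congr_arg_heq x.1 (Nat.add_sub_cancel' h₁)))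

theorem teleMap_untelescope (y : (B.Telescope ns hmono h0).PathSpace) :
    B.teleMap ns hmono h0 (untelescope ns hmono h0 y) = y := by
  refine Subtype.ext (funext fun l => Subtype.ext (funext fun t => ?_))
  have ht := t.isLt
  refine (untelescopeEdge_eq y (l := l) (Nat.le_add_right _ _) (by omega)).trans ?_
  exact eq_of_heq ((B.castE_heq _ _).trans
    (congr_arg_heq (fun s => (y.1 l).1 s) (Fin.ext (by simp))))

noncomputable def teleEquiv : B.PathSpace ≃ (B.Telescope ns hmono h0).PathSpace :=
  ⟨B.teleMap ns hmono h0, untelescope ns hmono h0, untelescope_teleMap ns hmono h0,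
    teleMap_untelescope ns hmono h0⟩

variable {ns hmono h0}

@[simp]
theorem teleEquiv_apply (x : B.PathSpace) :
    teleEquiv ns hmono h0 x = B.teleMap ns hmono h0 x := rfl

theorem apply_eq_of_teleMap_eq {x y : B.PathSpace} {L i : ℕ} (h₁ : ns L ≤ i)
    (h₂ : i < ns (L + 1))
    (h : (B.teleMap ns hmono h0 x).1 L = (B.teleMap ns hmono h0 y).1 L) : x.1 i = y.1 i := by
  have := congrFun (congrArg Subtype.val h) ⟨i - ns L, by omega⟩
  change x.1 (ns L + (i - ns L)) = y.1 (ns L + (i - ns L)) at this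
  rwa [Nat.add_sub_cancel' h₁] at this

theorem teleMap_eq_below_iff {x y : B.PathSpace} {l : ℕ} :
    (∀ L, L < l → (B.teleMap ns hmono h0 x).1 L = (B.teleMap ns hmono h0 y).1 L) ↔
      ∀ i, i < ns l → x.1 i = y.1 i := by
  constructor
  · intro h i hi
    set L := levelOf ns i
    have h₁ : ns L ≤ i := ns_levelOf_le h0 i
    have h₂ : i < ns (L + 1) := lt_ns_levelOf_succ hmono i
    exact apply_eq_of_teleMap_eq h₁ h₂ (h L (hmono.lt_iff_lt.1 (h₁.trans_lt hi)))
  · intro h L hL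
    refine Subtype.ext (funext fun t => h _ ?_)
    have := t.isLt
    have := hmono.monotone (show L + 1 ≤ l by omega)
    omega

theorem teleMap_eq_above_iff {x y : B.PathSpace} {l : ℕ} :
    (∀ L, l < L → (B.teleMap ns hmono h0 x).1 L = (B.teleMap ns hmono h0 y).1 L) ↔
      ∀ i, ns (l + 1) ≤ i → x.1 i = y.1 i := by
  constructor
  · intro h i hi
    set L := levelOf ns i
    have h₁ : ns L ≤ i := ns_levelOf_le h0 i
    have h₂ : i < ns (L + 1) := lt_ns_levelOf_succ hmono i
    exact apply_eq_of_teleMap_eq h₁ h₂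
      (h L (Nat.lt_succ_iff.1 (hmono.lt_iff_lt.1 (hi.trans_lt h₂))))
  · intro h L hL
    exact Subtype.ext (funext fun t => h _ ((hmono.monotone hL).trans (Nat.le_add_right _ _)))

theorem pathLT_teleMap_iff {x y : B.PathSpace} :
    (B.Telescope ns hmono h0).pathLT (B.teleMap ns hmono h0 x) (B.teleMap ns hmono h0 y) ↔
      B.pathLT x y := by
  constructor
  · rintro ⟨L, ⟨t, ht, hlt, hin⟩, hout⟩
    refine ⟨ns L + t, hlt, fun n hn => ?_⟩
    by_cases hnL : n < ns (L + 1)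
    · have h' : x.1 (ns L + (n - ns L)) = y.1 (ns L + (n - ns L)) :=
        hin (n - ns L) (by omega) (by omega)
      rwa [Nat.add_sub_cancel' (show ns L ≤ n by omega)] at h'
    · exact teleMap_eq_above_iff.1 hout n (by omega)
  · rintro ⟨N, hlt, habove⟩
    set L := levelOf ns N
    have h₁ : ns L ≤ N := ns_levelOf_le h0 N
    have h₂ : N < ns (L + 1) := lt_ns_levelOf_succ hmono N
    refine ⟨L, ⟨N - ns L, by omega, ?_, fun t _ ht => habove _ (by dsimp only; omega)⟩,
      teleMap_eq_above_iff.2 fun i hi => habove i (by omega)⟩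
    show B.elt (x.1 (ns L + (N - ns L))) (y.1 (ns L + (N - ns L)))
    rwa [Nat.add_sub_cancel' h₁]

theorem isMinPath_teleMap_iff {x : B.PathSpace} :
    (B.Telescope ns hmono h0).IsMinPath (B.teleMap ns hmono h0 x) ↔ B.IsMinPath x := by
  rw [isMinPath_iff, isMinPath_iff, ← (teleEquiv ns hmono h0).forall_congr_right]
  exact forall_congr' fun z => not_congr pathLT_teleMap_iff

theorem isMaxPath_teleMap_iff {x : B.PathSpace} :
    (B.Telescope ns hmono h0).IsMaxPath (B.teleMap ns hmono h0 x) ↔ B.IsMaxPath x := by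
  rw [isMaxPath_iff, isMaxPath_iff, ← (teleEquiv ns hmono h0).forall_congr_right]
  exact forall_congr' fun z => not_congr pathLT_teleMap_iff

theorem properlyOrdered_telescope (hp : B.ProperlyOrdered) :
    (B.Telescope ns hmono h0).ProperlyOrdered :=
  ⟨((teleEquiv ns hmono h0).existsUnique_congr fun _ => isMinPath_teleMap_iff.symm).1 hp.1,
    ((teleEquiv ns hmono h0).existsUnique_congr fun _ => isMaxPath_teleMap_iff.symm).1 hp.2⟩

theorem fullyConnected_telescope {a b : ℕ} (h : B.FullyConnected (ns a) (ns b)) :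
    (B.Telescope ns hmono h0).FullyConnected a b := fun v w =>
  let ⟨x, hv, hw⟩ := h v w
  ⟨B.teleMap ns hmono h0 x, hv, hw⟩

theorem simple_telescope (hs : B.Simple) : (B.Telescope ns hmono h0).Simple := by
  rw [simple_iff_fullyConnected] at hs ⊢
  intro a
  obtain ⟨b, hab, hconn⟩ := hs (ns a)
  exact ⟨b, hmono.lt_iff_lt.1 (hab.trans_le hmono.le_apply),
    fullyConnected_telescope (hconn.mono le_rfl hab.le hmono.le_apply)⟩

variable (ns hmono h0) in
noncomputable def teleT (T : B.PathSpace ≃ B.PathSpace) :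
    (B.Telescope ns hmono h0).PathSpace ≃ (B.Telescope ns hmono h0).PathSpace :=
  (teleEquiv ns hmono h0).permCongr T

variable {T : B.PathSpace ≃ B.PathSpace}

theorem teleT_teleMap (x : B.PathSpace) :
    teleT ns hmono h0 T (B.teleMap ns hmono h0 x) = B.teleMap ns hmono h0 (T x) := by
  simp [teleT, Equiv.permCongr_apply, ← teleEquiv_apply]

theorem isVershik_teleT (hT : B.IsVershik T) :
    (B.Telescope ns hmono h0).IsVershik (teleT ns hmono h0 T) := by
  constructor
  · simp only [← (teleEquiv ns hmono h0).forall_congr_right, teleEquiv_apply, teleT_teleMap,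
      isMaxPath_teleMap_iff, pathLT_teleMap_iff]
    exact hT.1
  · simp only [← (teleEquiv ns hmono h0).forall_congr_right, teleEquiv_apply, teleT_teleMap,
      isMaxPath_teleMap_iff, isMinPath_teleMap_iff]
    exact hT.2

theorem iterZ_teleT_teleMap (m : ℤ) (x : B.PathSpace) :
    (B.Telescope ns hmono h0).iterZ (teleT ns hmono h0 T) m (B.teleMap ns hmono h0 x) =
      B.teleMap ns hmono h0 (B.iterZ T m x) :=
  (Equiv.apply_zpow_apply (teleEquiv ns hmono h0) (fun x => (teleT_teleMap x).symm) m x).symm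

theorem sameCoding_teleMap_iff {k : ℕ} {x y : B.PathSpace} :
    (B.Telescope ns hmono h0).SameCoding (teleT ns hmono h0 T) k
      (B.teleMap ns hmono h0 x) (B.teleMap ns hmono h0 y) ↔ B.SameCoding T (ns k) x y := by
  refine forall_congr' fun m => ?_
  rw [iterZ_teleT_teleMap, iterZ_teleT_teleMap]
  exact teleMap_eq_below_iff

theorem isMinEdge_teleMap {x : B.PathSpace} {l : ℕ}
    (h : ∀ i, i < ns (l + 1) → B.IsMinEdge (x.1 i)) :
    (B.Telescope ns hmono h0).IsMinEdge ((B.teleMap ns hmono h0 x).1 l) := by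
  rintro g ⟨N, hN, hlt, -⟩
  exact h (ns l + N) (by omega) _ hlt

theorem hasCut_teleMap {j : ℕ} {x y : B.PathSpace} (h : B.HasCut T (ns j) x y) :
    (B.Telescope ns hmono h0).HasCut (teleT ns hmono h0 T) j
      (B.teleMap ns hmono h0 x) (B.teleMap ns hmono h0 y) := by
  obtain ⟨m, hx, hy⟩ := h
  refine ⟨m, fun l hl => ?_, fun l hl => ?_⟩ <;> rw [iterZ_teleT_teleMap] <;>
    refine isMinEdge_teleMap fun i hi => ?_
  · exact hx i (hi.trans_le (hmono.monotone hl))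
  · exact hy i (hi.trans_le (hmono.monotone hl))

theorem depthPair_teleMap {k : ℕ} {x y : B.PathSpace} (h : B.DepthPair T (ns k) x y) :
    (B.Telescope ns hmono h0).DepthPair (teleT ns hmono h0 T) k
      (B.teleMap ns hmono h0 x) (B.teleMap ns hmono h0 y) := by
  obtain ⟨hxy, hsame, hdiff⟩ := h
  refine ⟨(teleEquiv ns hmono h0).injective.ne hxy, sameCoding_teleMap_iff.2 hsame,
    fun h' => hdiff ((sameCoding_teleMap_iff.1 h').mono ?_)⟩
  exact hmono (Nat.lt_succ_self k)

theorem timedAt_teleT {k : ℕ} (h : B.TimedAt T (ns k)) :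
    (B.Telescope ns hmono h0).TimedAt (teleT ns hmono h0 T) k := fun j hj =>
  let ⟨_, _, hxy, hcut⟩ := h (ns j) (hmono hj)
  ⟨_, _, depthPair_teleMap hxy, hasCut_teleMap hcut⟩

theorem exists_strictMono_timedAt (hW : B.WeaklyWellTimed T) :
    ∃ ns : ℕ → ℕ, StrictMono ns ∧ ns 0 = 0 ∧ ∀ l, 1 ≤ l → B.TimedAt T (ns l) := by
  choose next hle _ htimed using hW
  set ns : ℕ → ℕ := fun l => (fun n => next (n + 1))^[l] 0
  have hsucc : ∀ l, ns (l + 1) = next (ns l + 1) := fun l => Function.iterate_succ_apply' _ _ _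
  refine ⟨ns, strictMono_nat_of_lt_succ fun l => ?_, rfl, fun l hl => ?_⟩
  · rw [hsucc]; exact Nat.lt_of_succ_le (hle _)
  · obtain ⟨l, rfl⟩ := Nat.exists_eq_add_of_le' hl
    rw [hsucc]; exact htimed _

theorem exists_telescope_wellTimed (hT : B.IsVershik T) (hW : B.WeaklyWellTimed T) :
    ∃ (ns : ℕ → ℕ) (hmono : StrictMono ns) (h0 : ns 0 = 0)
      (T' : (B.Telescope ns hmono h0).PathSpace ≃ (B.Telescope ns hmono h0).PathSpace),
      (B.Telescope ns hmono h0).IsVershik T' ∧ (B.Telescope ns hmono h0).WellTimed T' := by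
  obtain ⟨ns, hmono, h0, htimed⟩ := exists_strictMono_timedAt hW
  exact ⟨ns, hmono, h0, teleT ns hmono h0 T, isVershik_teleT hT,
    fun k hk => timedAt_teleT (htimed k hk)⟩

end Telescope

section Topology

abbrev edgeTop (B : BDiagram) (n : ℕ) : TopologicalSpace (B.E n) := ⊥

theorem discreteTopology_edgeTop (B : BDiagram) (n : ℕ) :
    @DiscreteTopology (B.E n) (edgeTop B n) :=
  @DiscreteTopology.mk _ (edgeTop B n) rfl

attribute [local instance] edgeTop discreteTopology_edgeTop pathTop fintE

variable {B' : BDiagram} {X : Type*} [TopologicalSpace X]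

theorem continuous_edge (i : ℕ) : Continuous fun x : B.PathSpace => x.1 i :=
  (continuous_apply i).comp continuous_induced_dom

theorem compactSpace_pathSpace : CompactSpace B.PathSpace := by
  have hclosed : IsClosed {x : ∀ n, B.E n | ∀ n, B.tgt (x n) = B.src (x (n + 1))} := by
    simp only [Set.ofPred_forall]
    exact isClosed_iInter fun n => (isClopen_discrete
      {p : B.E n × B.E (n + 1) | B.tgt p.1 = B.src p.2}).isClosed.preimage
        ((continuous_apply n).prodMk (continuous_apply (n + 1)))
  exact isCompact_iff_compactSpace.mp hclosed.isCompact

theorem t2Space_pathSpace : T2Space B.PathSpace :=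
  inferInstanceAs (T2Space {x : ∀ n, B.E n // ∀ n, B.tgt (x n) = B.src (x (n + 1))})

attribute [local instance] compactSpace_pathSpace t2Space_pathSpace

theorem isClopen_setOf_forall_lt {P : ℕ → X → Prop} (h : ∀ i, IsClopen {x | P i x})
    (R : ℕ) :
    IsClopen {x | ∀ i < R, P i x} := by
  have : {x | ∀ i < R, P i x} = ⋂ i ∈ Finset.range R, {x | P i x} := by ext; simp
  exact this ▸ isClopen_biInter_finset fun i _ => h i

theorem isClopen_setOf_edge_mem {f : X → B.PathSpace} (hf : Continuous f) (i : ℕ)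
    (s : Set (B.E i)) : IsClopen {x | (f x).1 i ∈ s} :=
  (isClopen_discrete s).preimage ((continuous_edge i).comp hf)

theorem isClopen_setOf_edge_eq {f g : X → B.PathSpace} (hf : Continuous f)
    (hg : Continuous g) (i : ℕ) : IsClopen {x | (f x).1 i = (g x).1 i} :=
  (isClopen_discrete {p : B.E i × B.E i | p.1 = p.2}).preimage
    (((continuous_edge i).comp hf).prodMk ((continuous_edge i).comp hg))

theorem exists_agree_of_continuous {φ : B.PathSpace → B'.PathSpace} (hφ : Continuous φ)
    (r : ℕ) : ∃ R, ∀ x y : B.PathSpace, (∀ i < R, x.1 i = y.1 i) →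
      ∀ i < r, (φ x).1 i = (φ y).1 i := by
  have hV : ∀ R, IsClopen {p : B.PathSpace × B.PathSpace | ∀ i < R, p.1.1 i = p.2.1 i} :=
    isClopen_setOf_forall_lt fun i => isClopen_setOf_edge_eq continuous_fst continuous_snd i
  have hU : IsOpen {p : B.PathSpace × B.PathSpace | ∀ i < r, (φ p.1).1 i = (φ p.2).1 i} :=
    (isClopen_setOf_forall_lt (fun i => isClopen_setOf_edge_eq (hφ.comp continuous_fst)
      (hφ.comp continuous_snd) i) r).isOpen
  obtain ⟨R, hR⟩ := exists_subset_nhds_of_isCompact'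
    (V := fun R => {p : B.PathSpace × B.PathSpace | ∀ i < R, p.1.1 i = p.2.1 i})
    (Antitone.directed_ge fun R R' hRR' p hp i hi => hp i (hi.trans_le hRR'))
    (fun R => (hV R).isClosed.isCompact) (fun R => (hV R).isClosed) fun p hp => by
      have hdiag : p.1 = p.2 := Subtype.ext (funext fun i =>
        Set.mem_iInter.1 hp (i + 1) i (Nat.lt_succ_self i))
      exact hU.mem_nhds fun i _ => by rw [hdiag]
  exact ⟨R, fun x y hxy => hR (show (x, y) ∈ _ from hxy)⟩

theorem exists_isMinEdge_of_continuous {φ : B.PathSpace → B'.PathSpace} (hφ : Continuous φ)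
    {xmin : B.PathSpace} (hxmin : ∀ z, B.IsMinPath z → z = xmin)
    (hφmin : B'.IsMinPath (φ xmin)) (j : ℕ) :
    ∃ J, ∀ z : B.PathSpace, (∀ i < J, B.IsMinEdge (z.1 i)) →
      ∀ i < j, B'.IsMinEdge ((φ z).1 i) := by
  have hV : ∀ J, IsClopen {z : B.PathSpace | ∀ i < J, B.IsMinEdge (z.1 i)} :=
    isClopen_setOf_forall_lt fun i => isClopen_setOf_edge_mem continuous_id i {e | B.IsMinEdge e}
  have hU : IsOpen {z : B.PathSpace | ∀ i < j, B'.IsMinEdge ((φ z).1 i)} :=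
    (isClopen_setOf_forall_lt (fun i => isClopen_setOf_edge_mem hφ i {e | B'.IsMinEdge e})
      j).isOpen
  obtain ⟨J, hJ⟩ := exists_subset_nhds_of_isCompact'
    (V := fun J => {z : B.PathSpace | ∀ i < J, B.IsMinEdge (z.1 i)})
    (Antitone.directed_ge fun J J' hJJ' z hz i hi => hz i (hi.trans_le hJJ'))
    (fun J => (hV J).isClosed.isCompact) (fun J => (hV J).isClosed) fun z hz => by
      have hzmin : z = xmin := hxmin z fun i =>
        Set.mem_iInter.1 hz (i + 1) i (Nat.lt_succ_self i)
      exact hU.mem_nhds fun i _ => hzmin ▸ hφmin i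
  exact ⟨J, fun z hz => hJ hz⟩

theorem exists_sameCoding_of_continuous {T : B.PathSpace ≃ B.PathSpace}
    {T' : B'.PathSpace ≃ B'.PathSpace} {φ : B.PathSpace → B'.PathSpace} (hφ : Continuous φ)
    (hcomm : ∀ m x, φ (B.iterZ T m x) = B'.iterZ T' m (φ x)) (r : ℕ) :
    ∃ R, ∀ x y, B.SameCoding T R x y → B'.SameCoding T' r (φ x) (φ y) := by
  obtain ⟨R, hR⟩ := exists_agree_of_continuous hφ r
  exact ⟨R, fun x y h m i hi => by rw [← hcomm, ← hcomm]; exact hR _ _ (h m) i hi⟩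

theorem exists_hasCut_of_continuous {T : B.PathSpace ≃ B.PathSpace}
    {T' : B'.PathSpace ≃ B'.PathSpace} {φ : B.PathSpace → B'.PathSpace} (hφ : Continuous φ)
    (hcomm : ∀ m x, φ (B.iterZ T m x) = B'.iterZ T' m (φ x)) {xmin : B.PathSpace}
    (hxmin : ∀ z, B.IsMinPath z → z = xmin) (hφmin : B'.IsMinPath (φ xmin)) (j : ℕ) :
    ∃ J, ∀ x y, B.HasCut T J x y → B'.HasCut T' j (φ x) (φ y) := by
  obtain ⟨J, hJ⟩ := exists_isMinEdge_of_continuous hφ hxmin hφmin j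
  refine ⟨J, fun x y ⟨m, hx, hy⟩ => ⟨m, ?_, ?_⟩⟩
  · rw [← hcomm]; exact hJ _ hx
  · rw [← hcomm]; exact hJ _ hy

variable {ns : ℕ → ℕ} {hmono : StrictMono ns} {h0 : ns 0 = 0}

theorem continuous_teleMap : Continuous (B.teleMap ns hmono h0) := by
  refine continuous_induced_rng.2 (continuous_pi fun l => continuous_discrete_rng.2 fun e => ?_)
  have : (fun x => (B.teleMap ns hmono h0 x).1 l) ⁻¹' {e} =
      ⋂ t, {x : B.PathSpace | x.1 (ns l + t.val) = e.1 t} := by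
    ext x
    simp only [Set.mem_preimage, Set.mem_singleton_iff, Set.mem_iInter, Set.mem_ofPred_eq]
    exact Subtype.ext_iff.trans funext_iff
  change IsOpen ((fun x => (B.teleMap ns hmono h0 x).1 l) ⁻¹' {e})
  rw [this]
  exact isOpen_iInter_of_finite fun t =>
    (isClopen_setOf_edge_mem continuous_id _ {e.1 t}).isOpen

theorem continuous_teleEquiv_symm : Continuous (teleEquiv ns hmono h0 (B := B)).symm :=
  continuous_teleMap.continuous_symm_of_equiv_compact_to_t2

end Topology

end BDiagram

open BDiagram

namespace BVSystem

noncomputable def telescope (S : BVSystem) (ns : ℕ → ℕ) (hmono : StrictMono ns)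
    (h0 : ns 0 = 0) : BVSystem :=
  ⟨S.B.Telescope ns hmono h0, teleT ns hmono h0 S.T, properlyOrdered_telescope S.proper,
    simple_telescope S.simple, isVershik_teleT S.vershik⟩

theorem conjugate_telescope (S : BVSystem) (ns : ℕ → ℕ) (hmono : StrictMono ns)
    (h0 : ns 0 = 0) : Conjugate S (S.telescope ns hmono h0) :=
  ⟨teleEquiv ns hmono h0, continuous_teleMap, continuous_teleEquiv_symm,
    fun x => (teleT_teleMap x).symm, fun _ hx => isMinPath_teleMap_iff.2 hx⟩

theorem exists_conjugate_wellTimed (S : BVSystem) {ns : ℕ → ℕ} {hmono : StrictMono ns}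
    {h0 : ns 0 = 0} {T' : (S.B.Telescope ns hmono h0).PathSpace ≃
      (S.B.Telescope ns hmono h0).PathSpace}
    (hT' : (S.B.Telescope ns hmono h0).IsVershik T')
    (hWT : (S.B.Telescope ns hmono h0).WellTimed T') :
    ∃ S' : BVSystem, Conjugate S S' ∧ S'.B.WellTimed S'.T := by
  have hT : T' = teleT ns hmono h0 S.T :=
    IsVershik.unique (properlyOrdered_telescope S.proper).1 hT' (isVershik_teleT S.vershik)
  subst hT
  exact ⟨S.telescope ns hmono h0, S.conjugate_telescope ns hmono h0, hWT⟩

end BVSystem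

theorem Conjugate.weaklyWellTimed {S S' : BVSystem} (h : Conjugate S S')
    (hWT : S'.B.WellTimed S'.T) : S.B.WeaklyWellTimed S.T := by
  obtain ⟨φ, hφ, hφsymm, hcomm, hmin⟩ := h
  have hzpow : ∀ m x, φ (S.B.iterZ S.T m x) = S'.B.iterZ S'.T m (φ x) :=
    Equiv.apply_zpow_apply φ hcomm
  have hzpow' : ∀ m x, φ.symm (S'.B.iterZ S'.T m x) = S.B.iterZ S.T m (φ.symm x) :=
    Equiv.apply_zpow_apply φ.symm fun x => φ.injective (by simp [hcomm])
  obtain ⟨⟨xmin, hxmin, -⟩, -⟩ := S.proper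
  obtain ⟨⟨xmin', -, huniq'⟩, -⟩ := S'.proper
  have hφmin : φ.symm xmin' = xmin := by rw [← huniq' _ (hmin _ hxmin), φ.symm_apply_apply]
  refine weaklyWellTimed_of_wellTimed hWT φ.symm φ.symm.injective
    (exists_sameCoding_of_continuous hφsymm hzpow') (fun r => ?_)
    (exists_hasCut_of_continuous hφsymm hzpow' huniq' (hφmin ▸ hxmin))
  obtain ⟨R, hR⟩ := exists_sameCoding_of_continuous hφ hzpow r
  exact ⟨R, fun x y h => by simpa using hR _ _ h⟩

/-- For a simple, properly ordered Bratteli–Vershik system the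
following are equivalent: (1) it is weakly well timed; (2) some telescoping of it
is well timed; (3) it is conjugate to a well timed system. -/
theorem weaklyWellTimed_tfae (S : BVSystem) :
    List.TFAE
      [S.B.WeaklyWellTimed S.T,
       ∃ (ns : ℕ → ℕ) (hmono : StrictMono ns) (h0 : ns 0 = 0)
         (T' : (S.B.Telescope ns hmono h0).PathSpace ≃
            (S.B.Telescope ns hmono h0).PathSpace),
         (S.B.Telescope ns hmono h0).IsVershik T' ∧
         (S.B.Telescope ns hmono h0).WellTimed T',
       ∃ S' : BVSystem, Conjugate S S' ∧ S'.B.WellTimed S'.T] := by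
  tfae_have 1 → 2 := exists_telescope_wellTimed S.vershik
  tfae_have 2 → 3 := fun ⟨_, _, _, _, hT', hWT⟩ => S.exists_conjugate_wellTimed hT' hWT
  tfae_have 3 → 1 := fun ⟨_, hconj, hWT⟩ => hconj.weaklyWellTimed hWT
  tfae_finish
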